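/- Let W(s) = (1−s²)²/4. For ε ∈ (0,1) set a_ε := 2/(1+ε²)³, s⁰_ε := ε + ε³ + ε|log ε|, and p_ε(s) := −a_ε (s − s⁰_ε)² + 1. Then for every s ∈ [ε|log ε|, s⁰_ε] one has | ε p_ε″(s) − W′(p_ε(s))/ε | ≤ 8ε. (Indeed, p_ε(s) ∈ [1 − 2ε²/(1+ε²), 1] on this interval, so |W′(p_ε(s))| ≤ 4ε²/(1+ε²), while ε|p_ε″(s)| = 4ε/(1+ε²)³.) -/

import Mathlib

/-- The double-well potential `W(s) = (1 − s²)²/4`. -/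
noncomputable def W (s : ℝ) : ℝ := (1 - s ^ 2) ^ 2 / 4

/-- Its derivative `W′(s) = −s(1 − s²)`. -/
noncomputable def W' (s : ℝ) : ℝ := -s * (1 - s ^ 2)

/-- `a_ε = 2/(1+ε²)³`. -/
noncomputable def aeps (ε : ℝ) : ℝ := 2 / (1 + ε ^ 2) ^ 3

/-- `s⁰_ε = ε + ε³ + ε|log ε|`. -/
noncomputable def s0 (ε : ℝ) : ℝ := ε + ε ^ 3 + ε * |Real.log ε|

/-- The gluing parabola `p_ε(s) = −a_ε(s − s⁰_ε)² + 1`. -/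
noncomputable def pglue (ε : ℝ) (s : ℝ) : ℝ := -(aeps ε) * (s - s0 ε) ^ 2 + 1

/-! Near the well at `1`, `W′(p) = −p(1 − p)(1 + p)` is at most `2(1 − p)` in absolute value,
so the potential term is at most `2(1 − p_ε)/ε ≤ 4ε`, while `ε p_ε″ = −2ε a_ε` is bounded by `4ε`. -/

lemma abs_W'_le_two_mul_one_sub {p : ℝ} (hp : |p| ≤ 1) : |W' p| ≤ 2 * (1 - p) := by
  have hsplit : W' p = -p * ((1 - p) * (1 + p)) := by unfold W'; ring
  obtain ⟨hp₁, hp₂⟩ := abs_le.mp hp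
  rw [hsplit, abs_mul, abs_neg, abs_of_nonneg (by nlinarith : 0 ≤ (1 - p) * (1 + p))]
  have hfactor : |p| * (1 + p) ≤ 2 := by nlinarith [abs_nonneg p]
  nlinarith [mul_le_mul_of_nonneg_left hfactor (sub_nonneg.mpr hp₂)]

lemma aeps_nonneg (ε : ℝ) : 0 ≤ aeps ε := by
  unfold aeps
  positivity

lemma aeps_le_two (ε : ℝ) : aeps ε ≤ 2 := by
  unfold aeps
  exact div_le_self zero_le_two (one_le_pow₀ (by nlinarith))

lemma aeps_mul_sq_eq (ε : ℝ) : aeps ε * (ε + ε ^ 3) ^ 2 = 2 * ε ^ 2 / (1 + ε ^ 2) := by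
  unfold aeps
  field_simp

lemma hasDerivAt_pglue (ε s : ℝ) : HasDerivAt (pglue ε) (-2 * aeps ε * (s - s0 ε)) s := by
  have h : HasDerivAt (fun x => -aeps ε * (x - s0 ε) ^ 2 + 1) (-aeps ε * (2 * (s - s0 ε))) s := by
    simpa using (((hasDerivAt_id s).sub_const (s0 ε)).fun_pow 2).const_mul (-aeps ε) |>.add_const 1
  exact h.congr_deriv (by ring)

lemma deriv_deriv_pglue (ε s : ℝ) : deriv (deriv (pglue ε)) s = -2 * aeps ε := by
  have hderiv : deriv (pglue ε) = fun x => -2 * aeps ε * (x - s0 ε) :=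
    funext fun x => (hasDerivAt_pglue ε x).deriv
  rw [hderiv]
  simp

lemma pglue_le_one (ε s : ℝ) : pglue ε s ≤ 1 := by
  unfold pglue
  nlinarith [mul_nonneg (aeps_nonneg ε) (sq_nonneg (s - s0 ε))]

lemma one_sub_le_pglue {ε s : ℝ} (hs : |s - s0 ε| ≤ ε + ε ^ 3) :
    1 - 2 * ε ^ 2 / (1 + ε ^ 2) ≤ pglue ε s := by
  have hsq : (s - s0 ε) ^ 2 ≤ (ε + ε ^ 3) ^ 2 := sq_le_sq' (abs_le.mp hs).1 (abs_le.mp hs).2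
  have := mul_le_mul_of_nonneg_left hsq (aeps_nonneg ε)
  rw [aeps_mul_sq_eq] at this
  unfold pglue
  linarith

/-- Allen–Cahn operator estimate in the gluing region: for every
`s ∈ [ε|log ε|, s⁰_ε]`, `|ε p_ε″(s) − W′(p_ε(s))/ε| ≤ 8ε`. -/
theorem stmt_16 (ε : ℝ) (hε : ε ∈ Set.Ioo (0:ℝ) 1) (s : ℝ)
    (hs : s ∈ Set.Icc (ε * |Real.log ε|) (s0 ε)) :
    |ε * deriv (deriv (pglue ε)) s - W' (pglue ε s) / ε| ≤ 8 * ε := by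
  obtain ⟨hε₀, hε₁⟩ := hε
  have hdist : |s - s0 ε| ≤ ε + ε ^ 3 := by
    rw [abs_le]
    constructor <;> linarith [hs.1, hs.2, show s0 ε = ε + ε ^ 3 + ε * |Real.log ε| from rfl]
  have hdiv : 2 * ε ^ 2 / (1 + ε ^ 2) ≤ 2 * ε ^ 2 :=
    div_le_self (by positivity) (by nlinarith)
  have hp : 1 - 2 * ε ^ 2 ≤ pglue ε s := by linarith [one_sub_le_pglue hdist]
  have hW : |W' (pglue ε s)| ≤ 4 * ε ^ 2 := by
    have hp_abs : |pglue ε s| ≤ 1 := abs_le.mpr ⟨by nlinarith, pglue_le_one ε s⟩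
    linarith [abs_W'_le_two_mul_one_sub hp_abs]
  rw [deriv_deriv_pglue]
  calc |ε * (-2 * aeps ε) - W' (pglue ε s) / ε|
      ≤ |ε * (-2 * aeps ε)| + |W' (pglue ε s)| / ε :=
        (abs_sub _ _).trans_eq (by rw [abs_div, abs_of_pos hε₀])
    _ ≤ 4 * ε + 4 * ε ^ 2 / ε := by
        gcongr
        rw [abs_mul, abs_of_pos hε₀, abs_of_nonpos (by linarith [aeps_nonneg ε])]
        linarith [mul_le_mul_of_nonneg_left (aeps_le_two ε) hε₀.le]
    _ = 8 * ε := by field_simp; ring
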